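/- arXiv:2205.12549 — 3 statements merged into one kernel-verified Lean document; each statement's English description precedes it below -/
import Mathlib

section
/- Assume (Dep-2) with ∇F(θ*) = 0 (so E[‖E[g_j(θ*)|F_{j-1}]‖²] ≤ B_ν² ν_j²), (GN-2), (Cov), and that ∇²F(θ*) is invertible with ∇²F(θ*) ⪰ μ I_d, μ > 0. Then for all t ≥ 1: E[ ‖ ∇²F(θ*)^{−1} (1/N_t) Σ_{i=1}^{t} n_i g_i(θ*) ‖² ] ≤ (Λ/N_t²) Σ_{i=1}^{t} n_i^{2(1−σ)} + (C_σ'/(μ² N_t²)) Σ_{i=1}^{t} n_i^{2(1−σ−σ')} + (2 B_ν/(μ² N_t²)) Σ_{j=2}^{t} ( n_j ν_j Σ_{i=1}^{j-1} n_i σ_i ). -/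
/-!
Write `A = ∇²F(θ*)⁻¹` and expand the square: `E‖A ∑ nᵢ gᵢ‖² = ∑ᵢⱼ nᵢ nⱼ E⟪A gᵢ, A gⱼ⟫`.
A diagonal term equals `tr (A² Covᵢ)`; since `0 ⪯ A² ⪯ μ⁻² I` (from `∇²F(θ*) ⪰ μ I`), the
covariance bound (Cov) gives `nᵢ^{2σ} tr (A² Covᵢ) ≤ Λ + μ⁻² tr Σᵢ`. For `i < j`, `gᵢ` is
`ℱ (j - 1)`-measurable, so `E⟪A² gᵢ, gⱼ⟫ = E⟪A² gᵢ, E[gⱼ | ℱ (j - 1)]⟫`, and Cauchy–Schwarz with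
(GN-2) and (Dep-2) bounds it by `μ⁻² σᵢ B_ν νⱼ`.
-/

open MeasureTheory Finset
open scoped RealInnerProductSpace

section SecondMoment

variable {Ω E : Type*} {m m0 : MeasurableSpace Ω} {P : Measure Ω} [NormedAddCommGroup E]
  {u v : Ω → E}

lemma MeasureTheory.MemLp.integral_norm_sq_comp_le {F : Type*} [NormedAddCommGroup F]
    (hu : MemLp u 2 P) {T : E → F} {c : ℝ} (hT : ∀ x, ‖T x‖ ≤ c * ‖x‖) :
    ∫ ω, ‖T (u ω)‖ ^ 2 ∂P ≤ c ^ 2 * ∫ ω, ‖u ω‖ ^ 2 ∂P := by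
  rw [← integral_const_mul]
  refine integral_mono_of_nonneg (.of_forall fun _ => by positivity)
    (((memLp_two_iff_integrable_sq_norm hu.1).mp hu).const_mul _) (.of_forall fun ω => ?_)
  simpa only [mul_pow] using pow_le_pow_left₀ (norm_nonneg _) (hT (u ω)) 2

variable [InnerProductSpace ℝ E]

lemma MeasureTheory.MemLp.inner_toLp_toLp (hu : MemLp u 2 P) (hv : MemLp v 2 P) :
    ⟪hu.toLp u, hv.toLp v⟫ = ∫ ω, ⟪u ω, v ω⟫ ∂P := by
  rw [L2.inner_def]
  refine integral_congr_ae ?_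
  filter_upwards [hu.coeFn_toLp, hv.coeFn_toLp] with ω h1 h2
  rw [h1, h2]

lemma MeasureTheory.MemLp.integrable_inner (hu : MemLp u 2 P) (hv : MemLp v 2 P) :
    Integrable (fun ω => ⟪u ω, v ω⟫) P := by
  refine (L2.integrable_inner (𝕜 := ℝ) (hu.toLp u) (hv.toLp v)).congr ?_
  filter_upwards [hu.coeFn_toLp, hv.coeFn_toLp] with ω h1 h2
  rw [h1, h2]

lemma MeasureTheory.MemLp.norm_toLp_sq (hu : MemLp u 2 P) :
    ‖hu.toLp u‖ ^ 2 = ∫ ω, ‖u ω‖ ^ 2 ∂P := by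
  simp_rw [← real_inner_self_eq_norm_sq, hu.inner_toLp_toLp hu]

lemma MeasureTheory.MemLp.integral_inner_le_mul (hu : MemLp u 2 P) (hv : MemLp v 2 P)
    {a b : ℝ} (ha : 0 ≤ a) (hb : 0 ≤ b)
    (hua : ∫ ω, ‖u ω‖ ^ 2 ∂P ≤ a ^ 2) (hvb : ∫ ω, ‖v ω‖ ^ 2 ∂P ≤ b ^ 2) :
    ∫ ω, ⟪u ω, v ω⟫ ∂P ≤ a * b := by
  rw [← hu.norm_toLp_sq] at hua
  rw [← hv.norm_toLp_sq] at hvb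
  rw [← hu.inner_toLp_toLp hv]
  exact (real_inner_le_norm _ _).trans <| mul_le_mul
    (pow_le_pow_iff_left₀ (norm_nonneg _) ha two_ne_zero |>.mp hua)
    (pow_le_pow_iff_left₀ (norm_nonneg _) hb two_ne_zero |>.mp hvb) (norm_nonneg _) ha

lemma MeasureTheory.MemLp.integral_inner_condExp [IsFiniteMeasure P] [CompleteSpace E]
    (hm : m ≤ m0) (hu : MemLp u 2 P) (hum : StronglyMeasurable[m] u) (hv : MemLp v 2 P) :
    ∫ ω, ⟪u ω, (P[v|m]) ω⟫ ∂P = ∫ ω, ⟪u ω, v ω⟫ ∂P := by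
  have hU : AEStronglyMeasurable[m] (hu.toLp u) P :=
    hum.aestronglyMeasurable.congr hu.coeFn_toLp.symm
  have key := inner_condExpL2_eq_inner_fun (𝕜 := ℝ) hm (hv.toLp v) (hu.toLp u) hU
  rw [hv.inner_toLp_toLp hu, L2.inner_def] at key
  simp_rw [real_inner_comm _ (u _), ← key]
  refine integral_congr_ae ?_
  filter_upwards [hv.condExpL2_ae_eq_condExp (𝕜 := ℝ) hm, hu.coeFn_toLp] with ω h1 h2
  rw [h1, h2]

lemma MeasureTheory.MemLp.integral_inner_le_of_condExp [IsFiniteMeasure P] [CompleteSpace E]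
    (hm : m ≤ m0) (hu : MemLp u 2 P) (hum : StronglyMeasurable[m] u) (hv : MemLp v 2 P)
    {a b : ℝ} (ha : 0 ≤ a) (hb : 0 ≤ b) (hua : ∫ ω, ‖u ω‖ ^ 2 ∂P ≤ a ^ 2)
    (hvb : ∫ ω, ‖(P[v|m]) ω‖ ^ 2 ∂P ≤ b ^ 2) :
    ∫ ω, ⟪u ω, v ω⟫ ∂P ≤ a * b := by
  rw [← hu.integral_inner_condExp hm hum hv]
  exact hu.integral_inner_le_mul (hv.condExp one_le_two) ha hb hua hvb

lemma MeasureTheory.MemLp.integral_norm_smul_sum_sq {ι : Type*} (s : Finset ι) (c : ℝ)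
    (w : ι → ℝ) {Y : ι → Ω → E} (hY : ∀ i, MemLp (Y i) 2 P) :
    ∫ ω, ‖c • ∑ i ∈ s, w i • Y i ω‖ ^ 2 ∂P
      = c ^ 2 * ∑ i ∈ s, ∑ j ∈ s, w i * w j * ∫ ω, ⟪Y i ω, Y j ω⟫ ∂P := by
  have hpt : ∀ ω, ‖c • ∑ i ∈ s, w i • Y i ω‖ ^ 2
      = c ^ 2 * ∑ i ∈ s, ∑ j ∈ s, w i * w j * ⟪Y i ω, Y j ω⟫ := fun ω => by
    rw [norm_smul, mul_pow, Real.norm_eq_abs, sq_abs, ← real_inner_self_eq_norm_sq, sum_inner]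
    simp_rw [inner_sum, real_inner_smul_left, real_inner_smul_right, mul_assoc]
  have hint : ∀ i j, Integrable (fun ω => w i * w j * ⟪Y i ω, Y j ω⟫) P := fun i j =>
    ((hY i).integrable_inner (hY j)).const_mul _
  simp_rw [hpt]
  rw [integral_const_mul, integral_finsetSum _ fun i _ => integrable_finsetSum _
    fun j _ => hint i j]
  simp_rw [integral_finsetSum _ fun j _ => hint _ j, integral_const_mul]

end SecondMoment

lemma Finset.sum_Icc_sum_Icc_eq_sum_diag_add_two_mul {R : Type*} [CommSemiring R]
    (c : ℕ → ℕ → R) (hc : ∀ i j, c i j = c j i) (t : ℕ) :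
    ∑ i ∈ Icc 1 t, ∑ j ∈ Icc 1 t, c i j
      = ∑ i ∈ Icc 1 t, c i i + 2 * ∑ j ∈ Icc 2 t, ∑ i ∈ Icc 1 (j - 1), c i j := by
  induction t with
  | zero => simp
  | succ t ih =>
    rcases Nat.eq_zero_or_pos t with rfl | ht
    · simp
    have hstep := sum_Icc_succ_top (M := R) (by omega : 1 ≤ t + 1)
    rw [sum_Icc_succ_top (by omega : 2 ≤ t + 1), Nat.add_sub_cancel]
    simp_rw [hstep, sum_add_distrib, ih]
    rw [sum_congr rfl fun j _ => hc (t + 1) j]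
    ring

lemma mul_self_mul_le_of_rpow_mul_le {x q a b σ σ' : ℝ} (hx : 0 < x)
    (h : x ^ (2 * σ) * q ≤ a + b * x ^ (-(2 * σ'))) :
    x * x * q ≤ a * x ^ (2 * (1 - σ)) + b * x ^ (2 * (1 - σ - σ')) := by
  have hsq : x * x = x ^ (2 * (1 - σ)) * x ^ (2 * σ) := by
    rw [← Real.rpow_add hx, show 2 * (1 - σ) + 2 * σ = (2 : ℕ) by push_cast; ring,
      Real.rpow_natCast, sq]
  have hexp : x ^ (2 * (1 - σ)) * x ^ (-(2 * σ')) = x ^ (2 * (1 - σ - σ')) := by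
    rw [← Real.rpow_add hx]
    ring_nf
  calc x * x * q = x ^ (2 * (1 - σ)) * (x ^ (2 * σ) * q) := by rw [hsq]; ring
    _ ≤ x ^ (2 * (1 - σ)) * (a + b * x ^ (-(2 * σ'))) :=
      mul_le_mul_of_nonneg_left h (by positivity)
    _ = a * x ^ (2 * (1 - σ)) + b * x ^ (2 * (1 - σ - σ')) := by rw [← hexp]; ring

namespace Matrix

variable {ι : Type*} [DecidableEq ι]

lemma posDef_of_posSemidef_sub_smul_one {H : Matrix ι ι ℝ} {μ : ℝ} (hμ : 0 < μ)
    (hH : (H - μ • 1).PosSemidef) : H.PosDef := by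
  simpa using PosDef.posSemidef_add hH (PosDef.one.smul hμ)

variable [Fintype ι]

open scoped MatrixOrder in
lemma PosSemidef.trace_mul_nonneg {S B : Matrix ι ι ℝ} (hS : S.PosSemidef) (hB : B.PosSemidef) :
    0 ≤ (S * B).trace := by
  obtain ⟨X, rfl⟩ : ∃ X : Matrix ι ι ℝ, S = Xᴴ * X :=
    ⟨CFC.sqrt S, by rw [← star_eq_conjTranspose, (CFC.sqrt_nonneg S).isSelfAdjoint.star_eq,
      CFC.sqrt_mul_sqrt_self S hS.nonneg]⟩
  rw [Matrix.mul_assoc, trace_mul_comm]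
  exact (hB.mul_mul_conjTranspose_same X).trace_nonneg

lemma trace_mul_le_of_posSemidef {M S T C : Matrix ι ι ℝ} {a c : ℝ} (hM : M.PosSemidef)
    (hcM : (c • 1 - M).PosSemidef) (hT : T.PosSemidef) (hC : (S + T - a • C).PosSemidef) :
    a * (M * C).trace ≤ (M * S).trace + c * T.trace := by
  have h1 := hC.trace_mul_nonneg hM
  have h2 := hT.trace_mul_nonneg hcM
  rw [sub_mul, add_mul, smul_mul, trace_sub, trace_add, trace_smul, smul_eq_mul] at h1
  rw [mul_sub, Matrix.mul_smul, trace_sub, trace_smul, mul_one, smul_eq_mul] at h2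
  rw [trace_mul_comm M C, trace_mul_comm M S]
  linarith

variable {H : Matrix ι ι ℝ} {μ : ℝ}

lemma norm_toEuclideanLin_inv_le (hμ : 0 < μ) (hH : (H - μ • 1).PosSemidef)
    (x : EuclideanSpace ℝ ι) : ‖toEuclideanLin H⁻¹ x‖ ≤ μ⁻¹ * ‖x‖ := by
  set y := toEuclideanLin H⁻¹ x
  have hHy : toEuclideanLin H y = x := by
    have hdet := (isUnit_iff_isUnit_det H).mp (posDef_of_posSemidef_sub_smul_one hμ hH).isUnit
    simp [y, ← LinearMap.comp_apply, ← toLpLin_mul_same, mul_nonsing_inv _ hdet]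
  have hpos := (isPositive_toEuclideanLin_iff.mpr hH).re_inner_nonneg_left y
  simp only [map_sub, map_smul, toLpLin_one, LinearMap.sub_apply, LinearMap.smul_apply,
    LinearMap.id_apply, hHy, inner_sub_left, real_inner_smul_left, real_inner_self_eq_norm_sq,
    RCLike.re_to_real] at hpos
  have hCS := real_inner_le_norm x y
  rw [le_inv_mul_iff₀ hμ]
  by_contra! h
  nlinarith [norm_nonneg x, norm_nonneg y]

lemma isSymmetric_toEuclideanLin_inv (hμ : 0 < μ) (hH : (H - μ • 1).PosSemidef) :
    (toEuclideanLin H⁻¹).IsSymmetric :=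
  isSymmetric_toEuclideanLin_iff.mpr (posDef_of_posSemidef_sub_smul_one hμ hH).isHermitian.inv

lemma IsHermitian.posSemidef_inv_mul_inv (hH : H.IsHermitian) :
    (H⁻¹ * H⁻¹).PosSemidef := by
  simpa only [hH.inv.eq] using posSemidef_conjTranspose_mul_self H⁻¹

lemma posSemidef_smul_one_sub_inv_mul_inv (hμ : 0 < μ) (hH : (H - μ • 1).PosSemidef) :
    (μ⁻¹ ^ 2 • 1 - H⁻¹ * H⁻¹).PosSemidef := by
  have hA := isSymmetric_toEuclideanLin_inv hμ hH
  rw [← isPositive_toEuclideanLin_iff]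
  refine ⟨isSymmetric_toEuclideanLin_iff.mpr ?_, fun x => ?_⟩
  · exact (isHermitian_one.smul (IsSelfAdjoint.all _)).sub
      (posDef_of_posSemidef_sub_smul_one hμ hH).isHermitian.posSemidef_inv_mul_inv.isHermitian
  · simp only [map_sub, map_smul, toLpLin_one, toLpLin_mul_same, LinearMap.sub_apply,
      LinearMap.smul_apply, LinearMap.id_apply, LinearMap.comp_apply, inner_sub_left,
      real_inner_smul_left, real_inner_self_eq_norm_sq, RCLike.re_to_real, hA _ x]
    have h := pow_le_pow_left₀ (norm_nonneg _) (norm_toEuclideanLin_inv_le hμ hH x) 2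
    rw [mul_pow] at h
    linarith

variable {Ω : Type*} {m m0 : MeasurableSpace Ω} {P : Measure Ω}

lemma integral_inner_toEuclideanLin_self_eq_trace (M C : Matrix ι ι ℝ)
    {X : Ω → EuclideanSpace ℝ ι} (hX : MemLp X 2 P)
    (hC : ∀ k l, C k l = ∫ ω, X ω k * X ω l ∂P) :
    ∫ ω, ⟪toEuclideanLin M (X ω), X ω⟫ ∂P = (M * C).trace := by
  have hXk : ∀ k, MemLp (fun ω => X ω k) 2 P := fun k =>
    (EuclideanSpace.proj k : EuclideanSpace ℝ ι →L[ℝ] ℝ).comp_memLp' hX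
  have hint : ∀ k l, Integrable (fun ω => M k l * (X ω l * X ω k)) P := fun k l =>
    ((hXk l).integrable_mul (hXk k)).const_mul _
  have hpt : ∀ x : EuclideanSpace ℝ ι,
      ⟪toEuclideanLin M x, x⟫ = ∑ k, ∑ l, M k l * (x l * x k) := fun x => by
    simp only [toLpLin_apply, PiLp.inner_apply, RCLike.inner_apply, conj_trivial,
      mulVec, dotProduct, Finset.mul_sum]
    exact sum_congr rfl fun k _ => sum_congr rfl fun l _ => by ring
  simp_rw [hpt]
  rw [integral_finsetSum _ fun k _ => integrable_finsetSum _ fun l _ => hint k l]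
  simp_rw [integral_finsetSum _ fun l _ => hint _ l, integral_const_mul, ← hC]
  simp [trace, mul_apply]

lemma integral_norm_sq_toEuclideanLin_inv_le {S T C : Matrix ι ι ℝ} {a : ℝ} (hμ : 0 < μ)
    (hH : (H - μ • 1).PosSemidef) (hT : T.PosSemidef) (hC : (S + T - a • C).PosSemidef)
    {X : Ω → EuclideanSpace ℝ ι} (hX : MemLp X 2 P)
    (hCX : ∀ k l, C k l = ∫ ω, X ω k * X ω l ∂P) :
    a * ∫ ω, ‖toEuclideanLin H⁻¹ (X ω)‖ ^ 2 ∂P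
      ≤ (H⁻¹ * S * H⁻¹).trace + μ⁻¹ ^ 2 * T.trace := by
  have hA := isSymmetric_toEuclideanLin_inv hμ hH
  have hmoment : ∫ ω, ‖toEuclideanLin H⁻¹ (X ω)‖ ^ 2 ∂P = (H⁻¹ * H⁻¹ * C).trace := by
    rw [← integral_inner_toEuclideanLin_self_eq_trace _ _ hX hCX]
    simp_rw [toLpLin_mul_same, LinearMap.comp_apply, hA _ (X _), real_inner_self_eq_norm_sq]
  rw [hmoment, trace_mul_cycle H⁻¹ S H⁻¹]
  exact trace_mul_le_of_posSemidef
    (posDef_of_posSemidef_sub_smul_one hμ hH).isHermitian.posSemidef_inv_mul_inv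
    (posSemidef_smul_one_sub_inv_mul_inv hμ hH) hT hC

lemma integral_inner_toEuclideanLin_inv_le_of_condExp [IsFiniteMeasure P] (hm : m ≤ m0)
    (hμ : 0 < μ) (hH : (H - μ • 1).PosSemidef) {X Y : Ω → EuclideanSpace ℝ ι}
    (hX : MemLp X 2 P) (hXm : Measurable[m] X) (hY : MemLp Y 2 P) {a b : ℝ} (ha : 0 ≤ a)
    (hb : 0 ≤ b) (hXa : ∫ ω, ‖X ω‖ ^ 2 ∂P ≤ a ^ 2)
    (hYb : ∫ ω, ‖(P[Y|m]) ω‖ ^ 2 ∂P ≤ b ^ 2) :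
    ∫ ω, ⟪toEuclideanLin H⁻¹ (X ω), toEuclideanLin H⁻¹ (Y ω)⟫ ∂P ≤ μ⁻¹ ^ 2 * a * b := by
  set A := toEuclideanLin H⁻¹
  have hAA : ∀ x, ‖A (A x)‖ ≤ μ⁻¹ ^ 2 * ‖x‖ := fun x => calc
    ‖A (A x)‖ ≤ μ⁻¹ * ‖A x‖ := norm_toEuclideanLin_inv_le hμ hH _
    _ ≤ μ⁻¹ * (μ⁻¹ * ‖x‖) := by gcongr; exact norm_toEuclideanLin_inv_le hμ hH _
    _ = μ⁻¹ ^ 2 * ‖x‖ := by ring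
  have hu : MemLp (fun ω => A (A (X ω))) 2 P := (A ∘ₗ A).toContinuousLinearMap.comp_memLp' hX
  have hum : StronglyMeasurable[m] (fun ω => A (A (X ω))) :=
    ((A ∘ₗ A).continuous_of_finiteDimensional.measurable.comp hXm).stronglyMeasurable
  have hsymm : ∀ ω, ⟪A (X ω), A (Y ω)⟫ = ⟪A (A (X ω)), Y ω⟫ := fun ω =>
    (isSymmetric_toEuclideanLin_inv hμ hH _ _).symm
  simp_rw [hsymm]
  refine hu.integral_inner_le_of_condExp hm hum hY (by positivity) hb ?_ hYb
  calc ∫ ω, ‖A (A (X ω))‖ ^ 2 ∂P ≤ (μ⁻¹ ^ 2) ^ 2 * ∫ ω, ‖X ω‖ ^ 2 ∂P :=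
        hX.integral_norm_sq_comp_le hAA
    _ ≤ (μ⁻¹ ^ 2) ^ 2 * a ^ 2 := by gcongr
    _ = (μ⁻¹ ^ 2 * a) ^ 2 := by ring

end Matrix

theorem assg_leading_term_bound_general
    {Ω : Type*} {m0 : MeasurableSpace Ω} (P : Measure Ω) [IsProbabilityMeasure P]
    (ℱ : MeasureTheory.Filtration ℕ m0)
    {d : ℕ}
    (θstar : EuclideanSpace ℝ (Fin d))
    (F : EuclideanSpace ℝ (Fin d) → ℝ)
    (hFcrit : gradient F θstar = 0)
    (g : ℕ → EuclideanSpace ℝ (Fin d) → Ω → EuclideanSpace ℝ (Fin d))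
    (hgmeas : ∀ t, Measurable[ℱ t] (g t θstar))
    (hgL2 : ∀ t x, MemLp (g t x) 2 P)
    (n : ℕ → ℕ) (hnpos : ∀ t, 0 < n t)
    (N : ℕ → ℕ)
    (ν σs : ℕ → ℝ) (hνpos : ∀ t, 0 < ν t) (hσpos : ∀ t, 0 < σs t)
    (Bν : ℝ) (hBν : 0 ≤ Bν)
    (σ : ℝ)
    (σ' : ℝ)
    (Cσ' : ℝ)
    -- (Dep-2) at θ*
    (hdep : ∀ j : ℕ, 1 ≤ j →
      ∫ ω, ‖(P[g j θstar | ℱ (j - 1)]) ω - gradient F θstar‖ ^ 2 ∂P ≤ Bν ^ 2 * ν j ^ 2)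
    -- (GN-2)
    (hgn : ∀ t : ℕ, 1 ≤ t → ∫ ω, ‖g t θstar ω‖ ^ 2 ∂P ≤ σs t ^ 2)
    -- (Cov)
    (Sm : Matrix (Fin d) (Fin d) ℝ)
    (Smt : ℕ → Matrix (Fin d) (Fin d) ℝ)
    (hSmt : ∀ t, (Smt t).PosSemidef)
    (hSmtTr : ∀ t : ℕ, 1 ≤ t → (Smt t).trace = Cσ' * (n t : ℝ) ^ (-(2 * σ')))
    (Cov : ℕ → Matrix (Fin d) (Fin d) ℝ)
    (hCov : ∀ t i j, Cov t i j = ∫ ω, g t θstar ω i * g t θstar ω j ∂P)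
    (hcov : ∀ t : ℕ, 1 ≤ t → (Sm + Smt t - (n t : ℝ) ^ (2 * σ) • Cov t).PosSemidef)
    -- the Hessian ∇²F(θ*) as a matrix, invertible with ∇²F(θ*) ⪰ μ I_d
    (μ : ℝ) (hμ : 0 < μ)
    (Hm : Matrix (Fin d) (Fin d) ℝ)
    (hHmμ : (Hm - μ • (1 : Matrix (Fin d) (Fin d) ℝ)).PosSemidef)
    (Λ : ℝ) (hΛ : Λ = (Hm⁻¹ * Sm * Hm⁻¹).trace) :
    ∀ t : ℕ, 1 ≤ t →
      ∫ ω, ‖Matrix.toEuclideanLin Hm⁻¹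
          ((N t : ℝ)⁻¹ • ∑ i ∈ Icc 1 t, (n i : ℝ) • g i θstar ω)‖ ^ 2 ∂P
        ≤ Λ / (N t : ℝ) ^ 2 * ∑ i ∈ Icc 1 t, (n i : ℝ) ^ (2 * (1 - σ))
          + Cσ' / (μ ^ 2 * (N t : ℝ) ^ 2) * ∑ i ∈ Icc 1 t, (n i : ℝ) ^ (2 * (1 - σ - σ'))
          + 2 * Bν / (μ ^ 2 * (N t : ℝ) ^ 2)
              * ∑ j ∈ Icc 2 t, (n j : ℝ) * ν j * ∑ i ∈ Icc 1 (j - 1), (n i : ℝ) * σs i := by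
  intro t _
  set A := Matrix.toEuclideanLin Hm⁻¹
  set q : ℕ → ℕ → ℝ := fun i j => ∫ ω, ⟪A (g i θstar ω), A (g j θstar ω)⟫ ∂P
  have hdiag : ∀ i ∈ Icc 1 t, (n i : ℝ) * n i * q i i
      ≤ Λ * (n i : ℝ) ^ (2 * (1 - σ)) + μ⁻¹ ^ 2 * Cσ' * (n i : ℝ) ^ (2 * (1 - σ - σ')) := by
    intro i hi
    have hi1 : 1 ≤ i := (mem_Icc.mp hi).1
    refine mul_self_mul_le_of_rpow_mul_le (by exact_mod_cast hnpos i) ?_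
    rw [hΛ, mul_assoc (μ⁻¹ ^ 2), ← hSmtTr i hi1]
    simpa only [q, real_inner_self_eq_norm_sq] using
      Matrix.integral_norm_sq_toEuclideanLin_inv_le hμ hHmμ (hSmt i) (hcov i hi1) (hgL2 i θstar)
        (hCov i)
  have hcross : ∀ j ∈ Icc 2 t, ∀ i ∈ Icc 1 (j - 1), (n i : ℝ) * n j * q i j
      ≤ μ⁻¹ ^ 2 * Bν * ((n j : ℝ) * ν j * ((n i : ℝ) * σs i)) := by
    intro j hj i hi
    have hqij := Matrix.integral_inner_toEuclideanLin_inv_le_of_condExp (ℱ.le (j - 1)) hμ hHmμ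
      (hgL2 i θstar) ((hgmeas i).mono (ℱ.mono (by grind)) le_rfl) (hgL2 j θstar) (hσpos i).le
      (mul_nonneg hBν (hνpos j).le) (hgn i (by grind))
      (by simpa only [hFcrit, sub_zero, mul_pow] using hdep j (by grind))
    calc (n i : ℝ) * n j * q i j ≤ n i * n j * (μ⁻¹ ^ 2 * σs i * (Bν * ν j)) := by gcongr
      _ = μ⁻¹ ^ 2 * Bν * ((n j : ℝ) * ν j * ((n i : ℝ) * σs i)) := by ring
  have hAg : ∀ i, MemLp (fun ω => A (g i θstar ω)) 2 P := fun i =>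
    A.toContinuousLinearMap.comp_memLp' (hgL2 i θstar)
  simp only [map_smul, map_sum]
  rw [MemLp.integral_norm_smul_sum_sq _ _ _ hAg, sum_Icc_sum_Icc_eq_sum_diag_add_two_mul _
    (fun i j => by simp only [real_inner_comm]; ring)]
  calc _ ≤ ((N t : ℝ)⁻¹) ^ 2 * (∑ i ∈ Icc 1 t, (Λ * (n i : ℝ) ^ (2 * (1 - σ))
          + μ⁻¹ ^ 2 * Cσ' * (n i : ℝ) ^ (2 * (1 - σ - σ')))
        + 2 * ∑ j ∈ Icc 2 t, ∑ i ∈ Icc 1 (j - 1),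
          μ⁻¹ ^ 2 * Bν * ((n j : ℝ) * ν j * ((n i : ℝ) * σs i))) := by
        refine mul_le_mul_of_nonneg_left (add_le_add (sum_le_sum hdiag) ?_) (sq_nonneg _)
        exact mul_le_mul_of_nonneg_left (sum_le_sum fun j hj => sum_le_sum (hcross j hj))
          zero_le_two
    _ = _ := by
        simp_rw [sum_add_distrib, ← mul_sum]
        ring

/-- Bound on the leading (Cramér–Rao) term of the Polyak–Ruppert decomposition:
second moment of `∇²F(θ*)^{-1}` applied to the weighted average of the scores. -/
theorem assg_leading_term_bound
    {Ω : Type*} {m0 : MeasurableSpace Ω} (P : Measure Ω) [IsProbabilityMeasure P]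
    (ℱ : MeasureTheory.Filtration ℕ m0)
    {d : ℕ} (hd : 1 ≤ d)
    (θstar : EuclideanSpace ℝ (Fin d))
    (F : EuclideanSpace ℝ (Fin d) → ℝ)
    (hF1 : Differentiable ℝ F) (hF2 : Differentiable ℝ (gradient F))
    (hFcrit : gradient F θstar = 0)
    (g : ℕ → EuclideanSpace ℝ (Fin d) → Ω → EuclideanSpace ℝ (Fin d))
    (hgmeas : ∀ t, Measurable[ℱ t] (g t θstar))
    (hgL2 : ∀ t x, MemLp (g t x) 2 P)
    (n : ℕ → ℕ) (hnpos : ∀ t, 0 < n t)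
    (N : ℕ → ℕ) (hN : ∀ t, N t = ∑ i ∈ Icc 1 t, n i)
    (ν σs : ℕ → ℝ) (hνpos : ∀ t, 0 < ν t) (hσpos : ∀ t, 0 < σs t)
    (Bν : ℝ) (hBν : 0 ≤ Bν)
    (σ : ℝ) (hσ0 : 0 ≤ σ) (hσhalf : σ ≤ 1 / 2)
    (σ' : ℝ) (hσ'0 : 0 < σ') (hσ'half : σ' ≤ 1 / 2)
    (Cσ' : ℝ) (hCσ' : 0 ≤ Cσ')
    -- (Dep-2) at θ*
    (hdep : ∀ j : ℕ, 1 ≤ j →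
      ∫ ω, ‖(P[g j θstar | ℱ (j - 1)]) ω - gradient F θstar‖ ^ 2 ∂P ≤ Bν ^ 2 * ν j ^ 2)
    -- (GN-2)
    (hgn : ∀ t : ℕ, 1 ≤ t → ∫ ω, ‖g t θstar ω‖ ^ 2 ∂P ≤ σs t ^ 2)
    -- (Cov)
    (Sm : Matrix (Fin d) (Fin d) ℝ) (hSm : Sm.PosSemidef)
    (Smt : ℕ → Matrix (Fin d) (Fin d) ℝ)
    (hSmt : ∀ t, (Smt t).PosSemidef)
    (hSmtTr : ∀ t : ℕ, 1 ≤ t → (Smt t).trace = Cσ' * (n t : ℝ) ^ (-(2 * σ')))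
    (Cov : ℕ → Matrix (Fin d) (Fin d) ℝ)
    (hCov : ∀ t i j, Cov t i j = ∫ ω, g t θstar ω i * g t θstar ω j ∂P)
    (hcov : ∀ t : ℕ, 1 ≤ t → (Sm + Smt t - (n t : ℝ) ^ (2 * σ) • Cov t).PosSemidef)
    -- the Hessian ∇²F(θ*) as a matrix, invertible with ∇²F(θ*) ⪰ μ I_d
    (μ : ℝ) (hμ : 0 < μ)
    (Hm : Matrix (Fin d) (Fin d) ℝ)
    (hHm : ∀ x : EuclideanSpace ℝ (Fin d),
      Matrix.toEuclideanLin Hm x = fderiv ℝ (gradient F) θstar x)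
    (hHminv : IsUnit Hm.det)
    (hHmμ : (Hm - μ • (1 : Matrix (Fin d) (Fin d) ℝ)).PosSemidef)
    (Λ : ℝ) (hΛ : Λ = (Hm⁻¹ * Sm * Hm⁻¹).trace) :
    ∀ t : ℕ, 1 ≤ t →
      ∫ ω, ‖Matrix.toEuclideanLin Hm⁻¹
          ((N t : ℝ)⁻¹ • ∑ i ∈ Icc 1 t, (n i : ℝ) • g i θstar ω)‖ ^ 2 ∂P
        ≤ Λ / (N t : ℝ) ^ 2 * ∑ i ∈ Icc 1 t, (n i : ℝ) ^ (2 * (1 - σ))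
          + Cσ' / (μ ^ 2 * (N t : ℝ) ^ 2) * ∑ i ∈ Icc 1 t, (n i : ℝ) ^ (2 * (1 - σ - σ'))
          + 2 * Bν / (μ ^ 2 * (N t : ℝ) ^ 2)
              * ∑ j ∈ Icc 2 t, (n j : ℝ) * ν j * ∑ i ∈ Icc 1 (j - 1), (n i : ℝ) * σs i :=
  assg_leading_term_bound_general P ℱ θstar F hFcrit g hgmeas hgL2 n hnpos N ν σs hνpos hσpos Bν hBν
    σ σ' Cσ' hdep hgn Sm Smt hSmt hSmtTr Cov hCov hcov μ hμ Hm hHmμ Λ hΛ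
end

section
/- Let ρ ∈ [0,1) and let C_ρ be a positive integer. Define n_t = ⌈C_ρ t^ρ⌉ for t ≥ 1 and N_t = Σ_{i=1}^{t} n_i. Then for every t ≥ 1: (N_t/(2 C_ρ))^{1/(1+ρ)} ≤ t ≤ (2 N_t/C_ρ)^{1/(1+ρ)}; equivalently, C_ρ t^{1+ρ}/2 ≤ N_t ≤ 2 C_ρ t^{1+ρ}. -/
open Finset

-- key step: b^p - (b-1)^p ≤ p * b^(p-1) for b ≥ 1, p ≥ 1
lemma sba_step (ρ : ℝ) (hρ0 : 0 ≤ ρ) (i : ℕ) (hi : 1 ≤ i) :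
    ((i : ℝ)) ^ (1 + ρ) - ((i - 1 : ℕ) : ℝ) ^ (1 + ρ) ≤ (1 + ρ) * (i : ℝ) ^ ρ := by
  set b : ℝ := (i : ℝ) with hb
  have hb1 : (1 : ℝ) ≤ b := by rw [hb]; exact_mod_cast hi
  have hb0 : (0 : ℝ) < b := by linarith
  have ha : ((i - 1 : ℕ) : ℝ) = b - 1 := by
    push_cast [Nat.cast_sub hi]; ring
  rw [ha]
  have hs : (-1 : ℝ) ≤ (b - 1) / b - 1 := by
    have : (0:ℝ) ≤ (b-1)/b := div_nonneg (by linarith) hb0.le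
    linarith
  have hp : (1 : ℝ) ≤ 1 + ρ := by linarith
  have hber := one_add_mul_self_le_rpow_one_add hs hp
  have h1s : 1 + ((b - 1) / b - 1) = (b - 1) / b := by ring
  rw [h1s] at hber
  have hdiv : ((b - 1) / b) ^ (1 + ρ) = (b - 1) ^ (1 + ρ) / b ^ (1 + ρ) :=
    Real.div_rpow (by linarith : (0:ℝ) ≤ b - 1) hb0.le _
  rw [hdiv] at hber
  -- multiply by b^(1+ρ) > 0
  have hbp : (0 : ℝ) < b ^ (1 + ρ) := Real.rpow_pos_of_pos hb0 _
  have hmul := mul_le_mul_of_nonneg_right hber hbp.le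
  rw [div_mul_cancel₀ _ (ne_of_gt hbp)] at hmul
  -- (1 + (1+ρ)*((b-1)/b - 1)) * b^(1+ρ) = b^(1+ρ) - (1+ρ) * b^ρ
  have hrw : (1 + (1 + ρ) * ((b - 1) / b - 1)) * b ^ (1 + ρ)
      = b ^ (1 + ρ) - (1 + ρ) * (b ^ (1 + ρ) / b) := by
    field_simp
    ring
  have hpow : b ^ (1 + ρ) / b = b ^ ρ := by
    rw [show (1 + ρ) = ρ + 1 by ring, Real.rpow_add hb0, Real.rpow_one,
      mul_div_cancel_right₀ _ (ne_of_gt hb0)]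
  rw [hrw, hpow] at hmul
  linarith

lemma sba_sum (ρ : ℝ) (hρ0 : 0 ≤ ρ) (t : ℕ) :
    ((t : ℝ)) ^ (1 + ρ) ≤ ∑ i ∈ Icc 1 t, (1 + ρ) * (i : ℝ) ^ ρ := by
  induction t with
  | zero => simp [Real.zero_rpow (by positivity : (1:ℝ)+ρ ≠ 0)]
  | succ t ih =>
    rw [Finset.sum_Icc_succ_top (by omega)]
    have := sba_step ρ hρ0 (t + 1) (by omega)
    simp only [Nat.add_sub_cancel] at this
    push_cast at this ⊢
    linarith

/-- Two-sided bound relating the accumulated number of observations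
`N_t = Σ_{i=1}^t ⌈C_ρ i^ρ⌉` to `t`. -/
theorem streaming_batch_accumulation_bounds
    (ρ : ℝ) (hρ0 : 0 ≤ ρ) (hρ1 : ρ < 1)
    (Cρ : ℕ) (hCρ : 0 < Cρ)
    (n : ℕ → ℕ) (hn : ∀ t, n t = ⌈(Cρ : ℝ) * (t : ℝ) ^ ρ⌉₊)
    (N : ℕ → ℕ) (hN : ∀ t, N t = ∑ i ∈ Icc 1 t, n i) :
    ∀ t : ℕ, 1 ≤ t →
      (((N t : ℝ) / (2 * (Cρ : ℝ))) ^ ((1 : ℝ) / (1 + ρ)) ≤ (t : ℝ)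
        ∧ (t : ℝ) ≤ ((2 * (N t : ℝ)) / (Cρ : ℝ)) ^ ((1 : ℝ) / (1 + ρ)))
      ∧ ((Cρ : ℝ) * (t : ℝ) ^ (1 + ρ) / 2 ≤ (N t : ℝ)
        ∧ (N t : ℝ) ≤ 2 * (Cρ : ℝ) * (t : ℝ) ^ (1 + ρ)) := by
  intro t ht
  have hC0 : (0 : ℝ) < (Cρ : ℝ) := by exact_mod_cast hCρ
  have hC1 : (1 : ℝ) ≤ (Cρ : ℝ) := by exact_mod_cast hCρ
  have ht0 : (0 : ℝ) < (t : ℝ) := by exact_mod_cast ht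
  have hp0 : (0 : ℝ) < 1 + ρ := by linarith
  have hNcast : (N t : ℝ) = ∑ i ∈ Icc 1 t, ((n i : ℝ)) := by
    rw [hN]; push_cast; ring
  -- lower bound
  have hlow : (Cρ : ℝ) * (t : ℝ) ^ (1 + ρ) / 2 ≤ (N t : ℝ) := by
    have h1 : ∑ i ∈ Icc 1 t, (Cρ : ℝ) * (i : ℝ) ^ ρ ≤ (N t : ℝ) := by
      rw [hNcast]
      apply Finset.sum_le_sum
      intro i _
      rw [hn i]
      exact Nat.le_ceil _
    have h2 : (t : ℝ) ^ (1 + ρ) / 2 ≤ ∑ i ∈ Icc 1 t, (i : ℝ) ^ ρ := by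
      have := sba_sum ρ hρ0 t
      rw [← Finset.mul_sum] at this
      have hsum0 : (0:ℝ) ≤ ∑ i ∈ Icc 1 t, (i : ℝ) ^ ρ :=
        Finset.sum_nonneg fun i _ => Real.rpow_nonneg (Nat.cast_nonneg i) ρ
      nlinarith
    calc (Cρ : ℝ) * (t : ℝ) ^ (1 + ρ) / 2
        ≤ (Cρ : ℝ) * ∑ i ∈ Icc 1 t, (i : ℝ) ^ ρ := by
          rw [mul_div_assoc]; exact mul_le_mul_of_nonneg_left h2 hC0.le
      _ = ∑ i ∈ Icc 1 t, (Cρ : ℝ) * (i : ℝ) ^ ρ := by rw [Finset.mul_sum]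
      _ ≤ (N t : ℝ) := h1
  -- upper bound
  have hup : (N t : ℝ) ≤ 2 * (Cρ : ℝ) * (t : ℝ) ^ (1 + ρ) := by
    have h1 : (N t : ℝ) ≤ ∑ i ∈ Icc 1 t, 2 * (Cρ : ℝ) * (t : ℝ) ^ ρ := by
      rw [hNcast]
      apply Finset.sum_le_sum
      intro i hi
      simp only [Finset.mem_Icc] at hi
      have hi1 : (1 : ℝ) ≤ (i : ℝ) := by exact_mod_cast hi.1
      have hit : (i : ℝ) ≤ (t : ℝ) := by exact_mod_cast hi.2
      have hiρ : (1 : ℝ) ≤ (i : ℝ) ^ ρ := Real.one_le_rpow hi1 hρ0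
      have hitρ : (i : ℝ) ^ ρ ≤ (t : ℝ) ^ ρ :=
        Real.rpow_le_rpow (by linarith) hit hρ0
      have hc : (n i : ℝ) < (Cρ : ℝ) * (i : ℝ) ^ ρ + 1 := by
        rw [hn i]
        exact Nat.ceil_lt_add_one (by positivity)
      nlinarith
    rw [Finset.sum_const, Nat.card_Icc] at h1
    simp only [Nat.add_sub_cancel, nsmul_eq_mul] at h1
    have : (t : ℝ) * (2 * (Cρ : ℝ) * (t : ℝ) ^ ρ) = 2 * (Cρ : ℝ) * (t : ℝ) ^ (1 + ρ) := by
      rw [Real.rpow_add ht0, Real.rpow_one]; ring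
    linarith
  refine ⟨⟨?_, ?_⟩, hlow, hup⟩
  · have h1 : (N t : ℝ) / (2 * (Cρ : ℝ)) ≤ (t : ℝ) ^ (1 + ρ) := by
      rw [div_le_iff₀ (by positivity)]
      linarith
    calc ((N t : ℝ) / (2 * (Cρ : ℝ))) ^ ((1:ℝ) / (1 + ρ))
        ≤ ((t : ℝ) ^ (1 + ρ)) ^ ((1:ℝ) / (1 + ρ)) :=
          Real.rpow_le_rpow (by positivity) h1 (by positivity)
      _ = (t : ℝ) := by
          rw [← Real.rpow_mul ht0.le, mul_one_div_cancel (ne_of_gt hp0), Real.rpow_one]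
  · have h1 : (t : ℝ) ^ (1 + ρ) ≤ 2 * (N t : ℝ) / (Cρ : ℝ) := by
      rw [le_div_iff₀ hC0]
      linarith
    calc (t : ℝ) = ((t : ℝ) ^ (1 + ρ)) ^ ((1:ℝ) / (1 + ρ)) := by
          rw [← Real.rpow_mul ht0.le, mul_one_div_cancel (ne_of_gt hp0), Real.rpow_one]
      _ ≤ (2 * (N t : ℝ) / (Cρ : ℝ)) ^ ((1:ℝ) / (1 + ρ)) :=
          Real.rpow_le_rpow (by positivity) h1 (by positivity)
end

section
/- Let (F_s)_{s≥0} be a filtration, θ* ∈ ℝ with |θ*| ≠ 1, σ > 0, and let (X_s) satisfy X_{s+1} = θ* X_s + ε_{s+1}, where X_s is F_s-measurable and square-integrable and the noise (ε_s) is adapted with E[ε_{s+i} | F_s] = 0, E[ε_{s+i}² | F_s] = σ², and E[ε_{s+i} ε_{s+j} | F_s] = 0 for all i ≠ j ≥ 1. Fix n ≥ 1, θ ∈ ℝ, and define the mini-batch squared-loss gradient g(θ) = −(2/n) Σ_{i=1}^{n} X_{s+i-1} (X_{s+i} − θ X_{s+i-1}). Then, almost surely, E[g(θ) | F_s] − 2σ²(θ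 − θ*)/(1 − (θ*)²) = ( 2(θ − θ*)(1 − (θ*)^{2n}) / ( n (1 − (θ*)²) ) ) · ( X_s² − σ²/(1 − (θ*)²) ). -/
open MeasureTheory Finset

/-!
Condition on `ℱ s` and write `Y i = X (s + i)`, `e i = ε (s + i)`, `v = σ² / (1 - θ*²)`.
Since `Y (i+1) e j = θ* Y i e j + e (i+1) e j`, induction from the pull-out property at `i = 0`
shows `E[Y i e j | ℱ s] = 0` for `i < j`. Hence the conditional second moments `c i` satisfy
`c (i+1) = θ*² c i + σ²`, a recursion with fixed point `v`, so `c i = v + θ*^{2i} (Y 0² - v)`.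
As `Y i (Y (i+1) - θ Y i) = (θ* - θ) Y i² + Y i e (i+1)`, the conditional mean of the gradient
is `-(2/n) (θ* - θ) ∑_{i<n} c i`, and summing the geometric series gives the claim.
-/

theorem condExp_const_mul_add_ae_eq {Ω : Type*} {m m0 : MeasurableSpace Ω} {P : Measure Ω}
    {f g : Ω → ℝ} (a : ℝ) (hf : Integrable f P) (hg : Integrable g P) :
    P[fun ω => a * f ω + g ω | m] =ᵐ[P] fun ω => a * P[f | m] ω + P[g | m] ω :=
  (condExp_add (hf.const_mul a) hg m).trans ((condExp_smul a f m).add Filter.EventuallyEq.rfl)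

theorem condExp_const_mul_sum_ae_eq {Ω ι : Type*} {m m0 : MeasurableSpace Ω} {P : Measure Ω}
    {s : Finset ι} {f g : ι → Ω → ℝ} (c : ℝ) (hf : ∀ i ∈ s, Integrable (f i) P)
    (hfg : ∀ i ∈ s, P[f i | m] =ᵐ[P] g i) :
    P[fun ω => c * ∑ i ∈ s, f i ω | m] =ᵐ[P] fun ω => c * ∑ i ∈ s, g i ω := by
  have hfun : (fun ω => c * ∑ i ∈ s, f i ω) = c • ∑ i ∈ s, f i := by
    ext ω
    simp only [Pi.smul_apply, Finset.sum_apply, smul_eq_mul]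
  rw [hfun]
  filter_upwards [condExp_smul c (∑ i ∈ s, f i) m, condExp_finsetSum hf m, eventuallyEq_sum hfg]
    with ω hsmul hsum hterms
  simp only [hsmul, Pi.smul_apply, hsum, hterms, Finset.sum_apply, smul_eq_mul]

theorem sum_range_add_pow_mul_sub {q v x : ℝ} (hq : q ≠ 1) (n : ℕ) :
    ∑ i ∈ range n, (v + q ^ i * (x - v)) = n * v + (1 - q ^ n) / (1 - q) * (x - v) := by
  rw [sum_add_distrib, ← sum_mul, geom_sum_eq hq, sum_const, card_range, nsmul_eq_mul]
  field_simp
  ring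

section AR1

variable {Ω : Type*} {m m0 : MeasurableSpace Ω} {P : Measure Ω} [IsFiniteMeasure P]
  {θ σ : ℝ} {X ε : ℕ → Ω → ℝ}

theorem condExp_state_mul_noise_ae_eq_zero (hX0 : Measurable[m] (X 0))
    (hXL2 : ∀ i, MemLp (X i) 2 P) (hεL2 : ∀ i, MemLp (ε i) 2 P)
    (hAR : ∀ i ω, X (i + 1) ω = θ * X i ω + ε (i + 1) ω)
    (hεmean : ∀ i, 1 ≤ i → P[ε i | m] =ᵐ[P] 0)
    (hεuncorr : ∀ i j, 1 ≤ i → 1 ≤ j → i ≠ j → P[fun ω => ε i ω * ε j ω | m] =ᵐ[P] 0)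
    {i j : ℕ} (hij : i < j) :
    P[fun ω => X i ω * ε j ω | m] =ᵐ[P] 0 := by
  induction i generalizing j with
  | zero =>
    have hpull : P[fun ω => X 0 ω * ε j ω | m] =ᵐ[P] fun ω => X 0 ω * P[ε j | m] ω :=
      condExp_mul_of_stronglyMeasurable_left hX0.stronglyMeasurable
        ((hXL2 0).integrable_mul (hεL2 j)) ((hεL2 j).integrable one_le_two)
    filter_upwards [hpull, hεmean j hij] with ω hprod hmean
    simp [hprod, hmean]
  | succ i ih =>
    have hfun : (fun ω => X (i + 1) ω * ε j ω)
        = fun ω => θ * (X i ω * ε j ω) + ε (i + 1) ω * ε j ω := by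
      ext ω
      rw [hAR]
      ring
    rw [hfun]
    filter_upwards [condExp_const_mul_add_ae_eq (f := fun ω => X i ω * ε j ω)
      (g := fun ω => ε (i + 1) ω * ε j ω) θ ((hXL2 i).integrable_mul (hεL2 j))
      ((hεL2 (i + 1)).integrable_mul (hεL2 j)), ih (j := j) (by omega),
      hεuncorr (i + 1) j (by omega) (by omega) (by omega)] with ω hlin hcross huncorr
    rw [hlin, hcross, huncorr]
    simp

theorem condExp_state_sq_ae_eq (hm : m ≤ m0) (hθ : θ ^ 2 ≠ 1)
    (hX0 : Measurable[m] (X 0)) (hXL2 : ∀ i, MemLp (X i) 2 P) (hεL2 : ∀ i, MemLp (ε i) 2 P)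
    (hAR : ∀ i ω, X (i + 1) ω = θ * X i ω + ε (i + 1) ω)
    (hεmean : ∀ i, 1 ≤ i → P[ε i | m] =ᵐ[P] 0)
    (hεvar : ∀ i, 1 ≤ i → P[fun ω => ε i ω ^ 2 | m] =ᵐ[P] fun _ => σ ^ 2)
    (hεuncorr : ∀ i j, 1 ≤ i → 1 ≤ j → i ≠ j → P[fun ω => ε i ω * ε j ω | m] =ᵐ[P] 0)
    (i : ℕ) :
    P[fun ω => X i ω ^ 2 | m] =ᵐ[P]
      fun ω => σ ^ 2 / (1 - θ ^ 2) + (θ ^ 2) ^ i * (X 0 ω ^ 2 - σ ^ 2 / (1 - θ ^ 2)) := by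
  induction i with
  | zero =>
    simpa using (condExp_of_stronglyMeasurable hm (hX0.pow_const 2).stronglyMeasurable
      (hXL2 0).integrable_sq).eventuallyEq
  | succ i ih =>
    have hfun : (fun ω => X (i + 1) ω ^ 2) = fun ω =>
        θ ^ 2 * X i ω ^ 2 + (2 * θ * (X i ω * ε (i + 1) ω) + ε (i + 1) ω ^ 2) := by
      ext ω
      rw [hAR]
      ring
    rw [hfun]
    filter_upwards [condExp_const_mul_add_ae_eq (f := fun ω => X i ω ^ 2)
      (g := fun ω => 2 * θ * (X i ω * ε (i + 1) ω) + ε (i + 1) ω ^ 2) (θ ^ 2)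
      (hXL2 i).integrable_sq
      ((((hXL2 i).integrable_mul (hεL2 (i + 1))).const_mul _).add (hεL2 (i + 1)).integrable_sq),
      condExp_const_mul_add_ae_eq (f := fun ω => X i ω * ε (i + 1) ω)
        (g := fun ω => ε (i + 1) ω ^ 2) (2 * θ) ((hXL2 i).integrable_mul (hεL2 (i + 1)))
        (hεL2 (i + 1)).integrable_sq, ih,
      condExp_state_mul_noise_ae_eq_zero hX0 hXL2 hεL2 hAR hεmean hεuncorr (Nat.lt_succ_self i),
      hεvar (i + 1) (by omega)]
      with ω hlin hlin' hsq hcross hvar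
    rw [hlin, hlin', hsq, hcross, hvar, Pi.zero_apply]
    field_simp
    ring

theorem condExp_state_mul_residual_ae_eq (hm : m ≤ m0)
    (hθ : θ ^ 2 ≠ 1) (hX0 : Measurable[m] (X 0)) (hXL2 : ∀ i, MemLp (X i) 2 P)
    (hεL2 : ∀ i, MemLp (ε i) 2 P) (hAR : ∀ i ω, X (i + 1) ω = θ * X i ω + ε (i + 1) ω)
    (hεmean : ∀ i, 1 ≤ i → P[ε i | m] =ᵐ[P] 0)
    (hεvar : ∀ i, 1 ≤ i → P[fun ω => ε i ω ^ 2 | m] =ᵐ[P] fun _ => σ ^ 2)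
    (hεuncorr : ∀ i j, 1 ≤ i → 1 ≤ j → i ≠ j → P[fun ω => ε i ω * ε j ω | m] =ᵐ[P] 0)
    (θv : ℝ) (i : ℕ) :
    P[fun ω => X i ω * (X (i + 1) ω - θv * X i ω) | m] =ᵐ[P] fun ω =>
      (θ - θv) * (σ ^ 2 / (1 - θ ^ 2) + (θ ^ 2) ^ i * (X 0 ω ^ 2 - σ ^ 2 / (1 - θ ^ 2))) := by
  have hfun : (fun ω => X i ω * (X (i + 1) ω - θv * X i ω))
      = fun ω => (θ - θv) * X i ω ^ 2 + X i ω * ε (i + 1) ω := by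
    ext ω
    rw [hAR]
    ring
  rw [hfun]
  filter_upwards [condExp_const_mul_add_ae_eq (f := fun ω => X i ω ^ 2)
    (g := fun ω => X i ω * ε (i + 1) ω) (θ - θv) (hXL2 i).integrable_sq
    ((hXL2 i).integrable_mul (hεL2 (i + 1))),
    condExp_state_sq_ae_eq hm hθ hX0 hXL2 hεL2 hAR hεmean hεvar hεuncorr i,
    condExp_state_mul_noise_ae_eq_zero hX0 hXL2 hεL2 hAR hεmean hεuncorr (Nat.lt_succ_self i)]
    with ω hlin hsq hcross
  rw [hlin, hsq, hcross, Pi.zero_apply, add_zero]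

end AR1

theorem ar1_minibatch_gradient_conditional_bias_general
    {Ω : Type*} {m0 : MeasurableSpace Ω} (P : Measure Ω) [IsProbabilityMeasure P]
    (ℱ : MeasureTheory.Filtration ℕ m0)
    (θst : ℝ) (hθst : |θst| ≠ 1) (σ : ℝ)
    (X ε : ℕ → Ω → ℝ)
    (hXmeas : ∀ s, Measurable[ℱ s] (X s))
    (hXL2 : ∀ s, MemLp (X s) 2 P)
    (hεL2 : ∀ s, MemLp (ε s) 2 P)
    (hAR : ∀ s ω, X (s + 1) ω = θst * X s ω + ε (s + 1) ω)
    (hεmean : ∀ s i : ℕ, 1 ≤ i → P[ε (s + i) | ℱ s] =ᵐ[P] 0)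
    (hεvar : ∀ s i : ℕ, 1 ≤ i →
      P[(fun ω => ε (s + i) ω ^ 2) | ℱ s] =ᵐ[P] fun _ => σ ^ 2)
    (hεuncorr : ∀ s i j : ℕ, 1 ≤ i → 1 ≤ j → i ≠ j →
      P[(fun ω => ε (s + i) ω * ε (s + j) ω) | ℱ s] =ᵐ[P] 0)
    (s n : ℕ) (hn : 1 ≤ n) (θv : ℝ) :
    (fun ω =>
        (P[(fun ω' => -(2 / (n : ℝ)) * ∑ i ∈ Icc 1 n,
            X (s + i - 1) ω' * (X (s + i) ω' - θv * X (s + i - 1) ω')) | ℱ s]) ω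
          - 2 * σ ^ 2 * (θv - θst) / (1 - θst ^ 2)) =ᵐ[P]
      fun ω => (2 * (θv - θst) * (1 - θst ^ (2 * n)) / ((n : ℝ) * (1 - θst ^ 2)))
        * (X s ω ^ 2 - σ ^ 2 / (1 - θst ^ 2)) := by
  have hθ : θst ^ 2 ≠ 1 := fun h => hθst <| by
    simpa using (sq_eq_sq_iff_abs_eq_abs θst 1).1 (by simpa using h)
  have hn' : (n : ℝ) ≠ 0 := Nat.cast_ne_zero.2 (by omega)
  have hreindex : (fun ω => -(2 / (n : ℝ)) * ∑ i ∈ Icc 1 n,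
      X (s + i - 1) ω * (X (s + i) ω - θv * X (s + i - 1) ω)) = fun ω => -(2 / (n : ℝ)) *
      ∑ i ∈ range n, X (s + i) ω * (X (s + i + 1) ω - θv * X (s + i) ω) := by
    ext ω
    rw [← Ico_add_one_right_eq_Icc, sum_Ico_eq_sum_range, add_tsub_cancel_right]
    refine congrArg _ (sum_congr rfl fun i _ => ?_)
    rw [add_comm 1 i, ← add_assoc, add_tsub_cancel_right]
  rw [hreindex]
  filter_upwards [condExp_const_mul_sum_ae_eq (s := range n)
    (f := fun i ω => X (s + i) ω * (X (s + i + 1) ω - θv * X (s + i) ω)) (-(2 / (n : ℝ)))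
    (fun i _ => (hXL2 (s + i)).integrable_mul
      ((hXL2 (s + i + 1)).sub ((hXL2 (s + i)).const_mul θv)))
    (fun i _ => condExp_state_mul_residual_ae_eq (X := fun i => X (s + i)) (ε := fun i => ε (s + i))
      (ℱ.le s) hθ (hXmeas s) (fun i => hXL2 (s + i)) (fun i => hεL2 (s + i))
      (fun i => hAR (s + i)) (hεmean s) (hεvar s) (hεuncorr s) θv i)] with ω hω
  rw [hω, ← mul_sum, sum_range_add_pow_mul_sub hθ, Nat.add_zero, pow_mul]
  field_simp
  ring

/-- Conditional bias of the streaming mini-batch least-squares gradient for a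
well-specified AR(1) model. -/
theorem ar1_minibatch_gradient_conditional_bias
    {Ω : Type*} {m0 : MeasurableSpace Ω} (P : Measure Ω) [IsProbabilityMeasure P]
    (ℱ : MeasureTheory.Filtration ℕ m0)
    (θst : ℝ) (hθst : |θst| ≠ 1) (σ : ℝ) (hσ : 0 < σ)
    (X ε : ℕ → Ω → ℝ)
    (hXmeas : ∀ s, Measurable[ℱ s] (X s))
    (hXL2 : ∀ s, MemLp (X s) 2 P)
    (hεmeas : ∀ s, Measurable[ℱ s] (ε s))
    (hεL2 : ∀ s, MemLp (ε s) 2 P)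
    (hAR : ∀ s ω, X (s + 1) ω = θst * X s ω + ε (s + 1) ω)
    (hεmean : ∀ s i : ℕ, 1 ≤ i → P[ε (s + i) | ℱ s] =ᵐ[P] 0)
    (hεvar : ∀ s i : ℕ, 1 ≤ i →
      P[(fun ω => ε (s + i) ω ^ 2) | ℱ s] =ᵐ[P] fun _ => σ ^ 2)
    (hεuncorr : ∀ s i j : ℕ, 1 ≤ i → 1 ≤ j → i ≠ j →
      P[(fun ω => ε (s + i) ω * ε (s + j) ω) | ℱ s] =ᵐ[P] 0)
    (s n : ℕ) (hn : 1 ≤ n) (θv : ℝ) :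
    (fun ω =>
        (P[(fun ω' => -(2 / (n : ℝ)) * ∑ i ∈ Icc 1 n,
            X (s + i - 1) ω' * (X (s + i) ω' - θv * X (s + i - 1) ω')) | ℱ s]) ω
          - 2 * σ ^ 2 * (θv - θst) / (1 - θst ^ 2)) =ᵐ[P]
      fun ω => (2 * (θv - θst) * (1 - θst ^ (2 * n)) / ((n : ℝ) * (1 - θst ^ 2)))
        * (X s ω ^ 2 - σ ^ 2 / (1 - θst ^ 2)) :=
  ar1_minibatch_gradient_conditional_bias_general P ℱ θst hθst σ X ε hXmeas hXL2 hεL2 hAR hεmean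
    hεvar hεuncorr s n hn θv
end
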